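/- Let w ∈ S_n be a prism with a letter i ∈ supp(w) unconfined in every reduced word of w, and suppose i+1 ∉ supp(w). Then either (w(i+1) = i and the value i+1 occurs among w(1),…,w(i)), or (w(i) = i+1 and w(i+1) ≤ i). (These two alternatives are the one-line-notation renderings of the two calibrated mesh patterns of the proposition.) -/

import Mathlib

/-- The adjacent transposition `σ_i`, swapping `i` and `i+1` (acting on `ℕ`). -/
def sigmaT (i : ℕ) : Equiv.Perm ℕ := Equiv.swap i (i + 1)

/-- The permutation given by a word (product of simple reflections, composed as functions). -/
def wordProd (s : List ℕ) : Equiv.Perm ℕ := (s.map sigmaT).prod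

/-- `s` is a word for `w` in `S_n`: all letters lie in `{1,…,n-1}` and the product is `w`. -/
def IsWord (n : ℕ) (w : Equiv.Perm ℕ) (s : List ℕ) : Prop :=
  (∀ j ∈ s, 1 ≤ j ∧ j ≤ n - 1) ∧ wordProd s = w

/-- `s` is a reduced word for `w`: a word of minimal length. -/
def IsReducedWord (n : ℕ) (w : Equiv.Perm ℕ) (s : List ℕ) : Prop :=
  IsWord n w s ∧ ∀ t : List ℕ, IsWord n w t → s.length ≤ t.length

/-- The Coxeter length `ℓ(w)`. -/
noncomputable def ell (n : ℕ) (w : Equiv.Perm ℕ) : ℕ :=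
  sInf {k | ∃ s : List ℕ, IsWord n w s ∧ s.length = k}

/-- The support of `w`: letters appearing in reduced words of `w`. -/
def supp (n : ℕ) (w : Equiv.Perm ℕ) : Set ℕ :=
  {i | ∃ s : List ℕ, IsReducedWord n w s ∧ i ∈ s}

/-- Bruhat order: some reduced word of `v` is a subsequence of some reduced word of `w`. -/
def BruhatLE (n : ℕ) (v w : Equiv.Perm ℕ) : Prop :=
  ∃ s t : List ℕ, IsReducedWord n v s ∧ IsReducedWord n w t ∧ s.Sublist t

/-- The principal order ideal `B(w)`, as a type. -/
def IdealB (n : ℕ) (w : Equiv.Perm ℕ) : Type := {v : Equiv.Perm ℕ // BruhatLE n v w}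

/-- The Bruhat order restricted to `B(w)`. -/
def IdealLE (n : ℕ) (w : Equiv.Perm ℕ) (a b : IdealB n w) : Prop := BruhatLE n a.1 b.1

/-- Two relations are isomorphic (order isomorphism of the corresponding ordered sets). -/
def RelIsomorphic {α β : Type*} (ra : α → α → Prop) (rb : β → β → Prop) : Prop :=
  ∃ e : α ≃ β, ∀ a b : α, ra a b ↔ rb (e a) (e b)

/-- `w` is a prism: `B(w) ≅ C₂ × X` for some partially ordered set `X`
(the two-element chain `C₂` realized as `Bool`), with the componentwise order. -/
def IsPrism (n : ℕ) (w : Equiv.Perm ℕ) : Prop :=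
  ∃ (X : Type) (rX : X → X → Prop), IsPartialOrder X rX ∧
    RelIsomorphic (IdealLE n w)
      (fun p q : Bool × X => (p.1 ≤ q.1) ∧ rX p.2 q.2)

/-- `w` belongs to `S_n`: it fixes every point outside `{1,…,n}`. -/
def MemSymm (n : ℕ) (w : Equiv.Perm ℕ) : Prop :=
  ∀ x : ℕ, x ∉ Set.Icc 1 n → w x = x

/-- `i` is unconfined in the word `s`: it appears exactly once, not between two copies
of `i+1` and not between two copies of `i-1`. -/
def Unconfined (i : ℕ) (s : List ℕ) : Prop :=
  s.count i = 1 ∧ ∀ a b : List ℕ, s = a ++ i :: b →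
    ¬((i + 1) ∈ a ∧ (i + 1) ∈ b) ∧ ¬((i - 1) ∈ a ∧ (i - 1) ∈ b)

/-- `B(w) ≅ C₂ × B(v)` with the componentwise order. -/
def IsoC2TimesIdeal (n : ℕ) (w v : Equiv.Perm ℕ) : Prop :=
  RelIsomorphic (IdealLE n w)
    (fun p q : Bool × IdealB n v => (p.1 ≤ q.1) ∧ IdealLE n v p.2 q.2)

/-! Write a reduced word as `a ++ i :: b` with `i ∉ a, b`; as `i + 1 ∉ supp w`, the letters
`i` and `i + 1` occur in neither `a` nor `b`. Hence `w = A σ_i B` where `A = wordProd a` and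
`B = wordProd b` fix `i + 1` and preserve `{1, …, i}`. Unconfinedness of `i` leaves `i - 1`
out of `a` or out of `b`, so `A` or `B` also fixes `i`, and evaluating `A σ_i B` at `i` and
`i + 1` gives the two patterns. -/

open Equiv Set

lemma sigmaT_apply_of_ne {j x : ℕ} (h : x ≠ j) (h' : x ≠ j + 1) : sigmaT j x = x :=
  swap_apply_of_ne_of_ne h h'

lemma wordProd_cons (j : ℕ) (t : List ℕ) : wordProd (j :: t) = sigmaT j * wordProd t := by
  simp [wordProd]

lemma wordProd_append_cons (a b : List ℕ) (i : ℕ) :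
    wordProd (a ++ i :: b) = wordProd a * sigmaT i * wordProd b := by
  simp [wordProd, mul_assoc]

lemma wordProd_apply_eq_self {t : List ℕ} {x : ℕ} (hx : x ∉ t) (hx' : x - 1 ∉ t) :
    wordProd t x = x := by
  induction t with
  | nil => simp [wordProd]
  | cons j t ih =>
    rw [List.mem_cons, not_or] at hx hx'
    rw [wordProd_cons, Perm.mul_apply, ih hx.2 hx'.2]
    exact sigmaT_apply_of_ne hx.1 (by omega)

lemma sigmaT_mapsTo_Icc {i j : ℕ} (hj : 1 ≤ j) (hji : j ≠ i) :
    MapsTo (sigmaT j) (Icc 1 i) (Icc 1 i) := by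
  rintro x ⟨hx1, hxi⟩
  rcases eq_or_ne x j with rfl | hxj
  · simp only [sigmaT, swap_apply_left, mem_Icc]; omega
  rcases eq_or_ne x (j + 1) with rfl | hxj'
  · simp only [sigmaT, swap_apply_right, mem_Icc]; omega
  rw [sigmaT_apply_of_ne hxj hxj']
  exact ⟨hx1, hxi⟩

lemma wordProd_mapsTo_Icc {i : ℕ} {t : List ℕ} (ht : ∀ j ∈ t, 1 ≤ j) (hi : i ∉ t) :
    MapsTo (wordProd t) (Icc 1 i) (Icc 1 i) := by
  induction t with
  | nil => simpa [wordProd] using mapsTo_id _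
  | cons j t ih =>
    rw [List.mem_cons, not_or] at hi
    rw [wordProd_cons, Perm.coe_mul]
    exact (sigmaT_mapsTo_Icc (ht j List.mem_cons_self) (Ne.symm hi.1)).comp
      (ih (fun k hk => ht k (List.mem_cons_of_mem j hk)) hi.2)

section Patterns

variable {A B : Perm ℕ} {i : ℕ}

lemma mul_sigmaT_mul_pattern_left (hi : 1 ≤ i) (hAi : A i = i) (hAi' : A (i + 1) = i + 1)
    (hBi' : B (i + 1) = i + 1) (hB : MapsTo B (Icc 1 i) (Icc 1 i)) :
    (A * sigmaT i * B) (i + 1) = i ∧ ∃ x, 1 ≤ x ∧ x ≤ i ∧ (A * sigmaT i * B) x = i + 1 := by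
  have hBij : BijOn B (Icc 1 i) (Icc 1 i) :=
    ((finite_Icc 1 i).injOn_iff_bijOn_of_mapsTo hB).mp B.injective.injOn
  obtain ⟨x, ⟨hx1, hxi⟩, hBx⟩ := hBij.surjOn (show i ∈ Icc 1 i from ⟨hi, le_rfl⟩)
  refine ⟨?_, x, hx1, hxi, ?_⟩
  · simp [hBi', sigmaT, hAi]
  · simp [hBx, sigmaT, hAi']

lemma mul_sigmaT_mul_pattern_right (hi : 1 ≤ i) (hAi' : A (i + 1) = i + 1)
    (hA : MapsTo A (Icc 1 i) (Icc 1 i)) (hBi : B i = i) (hBi' : B (i + 1) = i + 1) :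
    (A * sigmaT i * B) i = i + 1 ∧ (A * sigmaT i * B) (i + 1) ≤ i := by
  refine ⟨by simp [hBi, sigmaT, hAi'], ?_⟩
  simpa [hBi', sigmaT] using (hA (show i ∈ Icc 1 i from ⟨hi, le_rfl⟩)).2

end Patterns

theorem prism_incomplete_support_above_general (n : ℕ) (w : Equiv.Perm ℕ) (i : ℕ)
    (hi : i ∈ supp n w)
    (hu : ∀ s : List ℕ, IsReducedWord n w s → Unconfined i s)
    (hmiss : i + 1 ∉ supp n w) :
    (w (i + 1) = i ∧ ∃ x : ℕ, 1 ≤ x ∧ x ≤ i ∧ w x = i + 1) ∨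
    (w i = i + 1 ∧ w (i + 1) ≤ i) := by
  obtain ⟨s, hred, his⟩ := hi
  obtain ⟨hcount, hconf⟩ := hu s hred
  obtain ⟨a, b, hs⟩ := List.append_of_mem his
  have hpos : ∀ j ∈ s, 1 ≤ j := fun j hj => (hred.1.1 j hj).1
  have hi1 : 1 ≤ i := hpos i his
  have hs1 : i + 1 ∉ s := fun h => hmiss ⟨s, hred, h⟩
  subst hs
  have hia : i ∉ a ∧ i ∉ b := by
    rw [List.count_append, List.count_cons_self] at hcount
    exact ⟨List.count_eq_zero.mp (by omega), List.count_eq_zero.mp (by omega)⟩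
  simp only [List.mem_append, List.mem_cons, not_or] at hs1
  have hapos : ∀ j ∈ a, 1 ≤ j := fun j hj => hpos j (by simp [hj])
  have hbpos : ∀ j ∈ b, 1 ≤ j := fun j hj => hpos j (by simp [hj])
  have hAi' := wordProd_apply_eq_self hs1.1 hia.1
  have hBi' := wordProd_apply_eq_self hs1.2.2 hia.2
  rw [← hred.1.2, wordProd_append_cons]
  by_cases hb : i - 1 ∈ b
  · have ha : i - 1 ∉ a := fun ha => (hconf a b rfl).2 ⟨ha, hb⟩
    exact .inl (mul_sigmaT_mul_pattern_left hi1 (wordProd_apply_eq_self hia.1 ha) hAi' hBi'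
      (wordProd_mapsTo_Icc hbpos hia.2))
  · exact .inr (mul_sigmaT_mul_pattern_right hi1 hAi' (wordProd_mapsTo_Icc hapos hia.1)
      (wordProd_apply_eq_self hia.2 hb) hBi')

/-- a prism with unconfined i and i+1 ∉ supp(w) contains one of the two
calibrated patterns (one-line-notation rendering). -/
theorem prism_incomplete_support_above (n : ℕ) (w : Equiv.Perm ℕ) (hw : MemSymm n w) (i : ℕ)
    (hprism : IsPrism n w) (hi : i ∈ supp n w)
    (hu : ∀ s : List ℕ, IsReducedWord n w s → Unconfined i s)
    (hmiss : i + 1 ∉ supp n w) :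
    (w (i + 1) = i ∧ ∃ x : ℕ, 1 ≤ x ∧ x ≤ i ∧ w x = i + 1) ∨
    (w i = i + 1 ∧ w (i + 1) ≤ i) :=
  prism_incomplete_support_above_general n w i hi hu hmiss
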